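/- arXiv:2009.10909 — 3 statements merged into one kernel-verified Lean document; each statement's English description precedes it below -/
import Mathlib

section
/- Let Θ = (θ_0, θ_1) ∈ ℝ² and let V = (V_0, V_1) be a nonzero finite-dimensional Θ-stable representation of (Q,I) with θ_0·dim V_0 + θ_1·dim V_1 = 0, and suppose a_i ∘ b_j = 0 and b_j ∘ a_i = 0 for all i, j ∈ {1,2}. If θ_0 ≥ 0 then b_1 = b_2 = 0, and if θ_1 ≥ 0 then a_1 = a_2 = 0. (Case (A) in the proof of the trichotomy lemma.) -/
open Module

variable {V₀ V₁ : Type*} [AddCommGroup V₀] [Module ℂ V₀] [AddCommGroup V₁] [Module ℂ V₁]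

/-- `(W₀, W₁)` is a subrepresentation of the representation of the quiver `(Q, I)`
given by the data `(a₁, a₂, b₁, b₂, c, d)`. -/
def IsSubrep (a₁ a₂ : V₀ →ₗ[ℂ] V₁) (b₁ b₂ : V₁ →ₗ[ℂ] V₀)
    (c : V₀ →ₗ[ℂ] V₀) (d : V₁ →ₗ[ℂ] V₁)
    (W₀ : Submodule ℂ V₀) (W₁ : Submodule ℂ V₁) : Prop :=
  (∀ x ∈ W₀, a₁ x ∈ W₁) ∧ (∀ x ∈ W₀, a₂ x ∈ W₁) ∧
    (∀ y ∈ W₁, b₁ y ∈ W₀) ∧ (∀ y ∈ W₁, b₂ y ∈ W₀) ∧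
    (∀ x ∈ W₀, c x ∈ W₀) ∧ (∀ y ∈ W₁, d y ∈ W₁)

/-- The relations `a₂ bᵢ a₁ = a₁ bᵢ a₂`, `b₂ aᵢ b₁ = b₁ aᵢ b₂`, `d aᵢ = aᵢ c`,
`c bᵢ = bᵢ d` (i = 1, 2) of the quiver `(Q, I)`. -/
def SatisfiesRelations (a₁ a₂ : V₀ →ₗ[ℂ] V₁) (b₁ b₂ : V₁ →ₗ[ℂ] V₀)
    (c : V₀ →ₗ[ℂ] V₀) (d : V₁ →ₗ[ℂ] V₁) : Prop :=
  a₂ ∘ₗ b₁ ∘ₗ a₁ = a₁ ∘ₗ b₁ ∘ₗ a₂ ∧ a₂ ∘ₗ b₂ ∘ₗ a₁ = a₁ ∘ₗ b₂ ∘ₗ a₂ ∧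
    b₂ ∘ₗ a₁ ∘ₗ b₁ = b₁ ∘ₗ a₁ ∘ₗ b₂ ∧ b₂ ∘ₗ a₂ ∘ₗ b₁ = b₁ ∘ₗ a₂ ∘ₗ b₂ ∧
    d ∘ₗ a₁ = a₁ ∘ₗ c ∧ d ∘ₗ a₂ = a₂ ∘ₗ c ∧
    c ∘ₗ b₁ = b₁ ∘ₗ d ∧ c ∘ₗ b₂ = b₂ ∘ₗ d

/-- The slope `μ_Θ` of a pair of dimensions `(n₀, n₁)` with respect to `Θ = (θ₀, θ₁)`. -/
noncomputable def slopeMu (θ₀ θ₁ : ℝ) (n₀ n₁ : ℕ) : ℝ :=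
  (θ₀ * (n₀ : ℝ) + θ₁ * (n₁ : ℝ)) / ((n₀ : ℝ) + (n₁ : ℝ))

/-- `Θ`-stability of the (nonzero) representation `(V₀, V₁)`: every subrepresentation
`(W₀, W₁)` with `0 ≠ (W₀, W₁) ⊊ (V₀, V₁)` has strictly smaller slope. -/
def IsThetaStable [FiniteDimensional ℂ V₀] [FiniteDimensional ℂ V₁]
    (θ₀ θ₁ : ℝ) (a₁ a₂ : V₀ →ₗ[ℂ] V₁) (b₁ b₂ : V₁ →ₗ[ℂ] V₀)
    (c : V₀ →ₗ[ℂ] V₀) (d : V₁ →ₗ[ℂ] V₁) : Prop :=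
  ∀ W₀ : Submodule ℂ V₀, ∀ W₁ : Submodule ℂ V₁,
    IsSubrep a₁ a₂ b₁ b₂ c d W₀ W₁ →
    ¬(W₀ = ⊥ ∧ W₁ = ⊥) → ¬(W₀ = ⊤ ∧ W₁ = ⊤) →
    slopeMu θ₀ θ₁ (finrank ℂ W₀) (finrank ℂ W₁) <
      slopeMu θ₀ θ₁ (finrank ℂ V₀) (finrank ℂ V₁)

/-!
Since `Θ(V) = 0`, stability says that `Θ(W) < 0` for every proper nonzero subrepresentation `W`.
When all `bⱼ aᵢ` vanish and `c bⱼ = bⱼ d`, the pair `(V₀, ker b₁ ∩ ker b₂)` is a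
subrepresentation, and for `θ₀ ≥ 0` its weight `θ₀ dim V₀ + θ₁ dim (ker b₁ ∩ ker b₂)` is
nonnegative; so it is all of `V`, i.e. `b₁ = b₂ = 0`. The claim for the `aᵢ` is the same
statement after exchanging the two vertices of the quiver.
-/

lemma slopeMu_swap (θ₀ θ₁ : ℝ) (n₀ n₁ : ℕ) :
    slopeMu θ₀ θ₁ n₀ n₁ = slopeMu θ₁ θ₀ n₁ n₀ := by
  unfold slopeMu
  ring

section

variable {a₁ a₂ : V₀ →ₗ[ℂ] V₁} {b₁ b₂ : V₁ →ₗ[ℂ] V₀} {c : V₀ →ₗ[ℂ] V₀} {d : V₁ →ₗ[ℂ] V₁}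

lemma IsSubrep.swap {W₀ : Submodule ℂ V₀} {W₁ : Submodule ℂ V₁}
    (h : IsSubrep a₁ a₂ b₁ b₂ c d W₀ W₁) : IsSubrep b₁ b₂ a₁ a₂ d c W₁ W₀ := by
  obtain ⟨h₁, h₂, h₃, h₄, h₅, h₆⟩ := h
  exact ⟨h₃, h₄, h₁, h₂, h₆, h₅⟩

lemma isSubrep_top_ker_inf_ker (hcb₁ : c ∘ₗ b₁ = b₁ ∘ₗ d) (hcb₂ : c ∘ₗ b₂ = b₂ ∘ₗ d)
    (h₁₁ : b₁ ∘ₗ a₁ = 0) (h₁₂ : b₁ ∘ₗ a₂ = 0) (h₂₁ : b₂ ∘ₗ a₁ = 0) (h₂₂ : b₂ ∘ₗ a₂ = 0) :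
    IsSubrep a₁ a₂ b₁ b₂ c d ⊤ (LinearMap.ker b₁ ⊓ LinearMap.ker b₂) := by
  refine ⟨fun x _ => ⟨?_, ?_⟩, fun x _ => ⟨?_, ?_⟩, fun _ _ => trivial, fun _ _ => trivial,
    fun _ _ => trivial, fun y ⟨hy₁, hy₂⟩ => ⟨?_, ?_⟩⟩
  · exact LinearMap.congr_fun h₁₁ x
  · exact LinearMap.congr_fun h₂₁ x
  · exact LinearMap.congr_fun h₁₂ x
  · exact LinearMap.congr_fun h₂₂ x
  · change b₁ (d y) = 0
    rw [← LinearMap.comp_apply, ← hcb₁, LinearMap.comp_apply, LinearMap.mem_ker.mp hy₁, map_zero]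
  · change b₂ (d y) = 0
    rw [← LinearMap.comp_apply, ← hcb₂, LinearMap.comp_apply, LinearMap.mem_ker.mp hy₂, map_zero]

variable [FiniteDimensional ℂ V₀] [FiniteDimensional ℂ V₁] {θ₀ θ₁ : ℝ}

lemma IsThetaStable.swap (h : IsThetaStable θ₀ θ₁ a₁ a₂ b₁ b₂ c d) :
    IsThetaStable θ₁ θ₀ b₁ b₂ a₁ a₂ d c := by
  intro W₁ W₀ hW hbot htop
  rw [slopeMu_swap, slopeMu_swap θ₁]
  exact h W₀ W₁ hW.swap (fun ⟨h₀, h₁⟩ => hbot ⟨h₁, h₀⟩) (fun ⟨h₀, h₁⟩ => htop ⟨h₁, h₀⟩)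

lemma IsThetaStable.weight_neg_of_isSubrep (hstab : IsThetaStable θ₀ θ₁ a₁ a₂ b₁ b₂ c d)
    (hzero : θ₀ * (finrank ℂ V₀ : ℝ) + θ₁ * (finrank ℂ V₁ : ℝ) = 0)
    {W₀ : Submodule ℂ V₀} {W₁ : Submodule ℂ V₁} (hW : IsSubrep a₁ a₂ b₁ b₂ c d W₀ W₁)
    (hbot : ¬(W₀ = ⊥ ∧ W₁ = ⊥)) (htop : ¬(W₀ = ⊤ ∧ W₁ = ⊤)) :
    θ₀ * (finrank ℂ W₀ : ℝ) + θ₁ * (finrank ℂ W₁ : ℝ) < 0 := by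
  have hlt := hstab W₀ W₁ hW hbot htop
  rw [slopeMu, slopeMu, hzero, zero_div] at hlt
  exact neg_of_div_neg_left hlt (by positivity)

lemma IsThetaStable.eq_zero_of_isSubrep_top_ker_inf_ker
    (hstab : IsThetaStable θ₀ θ₁ a₁ a₂ b₁ b₂ c d)
    (hzero : θ₀ * (finrank ℂ V₀ : ℝ) + θ₁ * (finrank ℂ V₁ : ℝ) = 0) (hθ₀ : 0 ≤ θ₀)
    (hK : IsSubrep a₁ a₂ b₁ b₂ c d ⊤ (LinearMap.ker b₁ ⊓ LinearMap.ker b₂)) :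
    b₁ = 0 ∧ b₂ = 0 := by
  by_contra hb
  have hK_ne_top : LinearMap.ker b₁ ⊓ LinearMap.ker b₂ ≠ ⊤ := by
    simpa only [ne_eq, inf_eq_top_iff, LinearMap.ker_eq_top] using hb
  have hbot : ¬((⊤ : Submodule ℂ V₀) = ⊥ ∧ LinearMap.ker b₁ ⊓ LinearMap.ker b₂ = ⊥) := by
    rintro ⟨htop, -⟩
    have : Subsingleton V₀ :=
      (Submodule.subsingleton_iff ℂ).mp (subsingleton_of_bot_eq_top htop.symm)
    exact hb ⟨Subsingleton.elim _ _, Subsingleton.elim _ _⟩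
  have hneg := hstab.weight_neg_of_isSubrep hzero hK hbot (fun h => hK_ne_top h.2)
  have hk : (finrank ℂ ↥(LinearMap.ker b₁ ⊓ LinearMap.ker b₂) : ℝ) ≤ finrank ℂ V₁ :=
    mod_cast Submodule.finrank_le _
  rw [finrank_top] at hneg
  -- With `K = ker b₁ ⊓ ker b₂`: if `θ₁ ≤ 0` then `Θ(V₀, K) ≥ Θ(V) = 0`, else `Θ(V₀, K) ≥ θ₀ dim V₀ ≥ 0`.
  rcases le_or_gt θ₁ 0 with hθ₁ | hθ₁ <;> nlinarith [Nat.cast_nonneg (α := ℝ) (finrank ℂ V₀),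
    Nat.cast_nonneg (α := ℝ) (finrank ℂ ↥(LinearMap.ker b₁ ⊓ LinearMap.ker b₂))]

end

theorem caseA_of_theta_stable_general
    [FiniteDimensional ℂ V₀] [FiniteDimensional ℂ V₁]
    (θ₀ θ₁ : ℝ) (a₁ a₂ : V₀ →ₗ[ℂ] V₁) (b₁ b₂ : V₁ →ₗ[ℂ] V₀)
    (c : V₀ →ₗ[ℂ] V₀) (d : V₁ →ₗ[ℂ] V₁)
    (hrel : SatisfiesRelations a₁ a₂ b₁ b₂ c d)
    (hstab : IsThetaStable θ₀ θ₁ a₁ a₂ b₁ b₂ c d)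
    (hzero : θ₀ * (finrank ℂ V₀ : ℝ) + θ₁ * (finrank ℂ V₁ : ℝ) = 0)
    (hcomp : ∀ a : V₀ →ₗ[ℂ] V₁, ∀ b : V₁ →ₗ[ℂ] V₀,
      (a = a₁ ∨ a = a₂) → (b = b₁ ∨ b = b₂) → a ∘ₗ b = 0 ∧ b ∘ₗ a = 0) :
    (0 ≤ θ₀ → b₁ = 0 ∧ b₂ = 0) ∧ (0 ≤ θ₁ → a₁ = 0 ∧ a₂ = 0) := by
  obtain ⟨-, -, -, -, hda₁, hda₂, hcb₁, hcb₂⟩ := hrel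
  have h₁₁ := hcomp a₁ b₁ (.inl rfl) (.inl rfl)
  have h₁₂ := hcomp a₁ b₂ (.inl rfl) (.inr rfl)
  have h₂₁ := hcomp a₂ b₁ (.inr rfl) (.inl rfl)
  have h₂₂ := hcomp a₂ b₂ (.inr rfl) (.inr rfl)
  refine ⟨fun hθ₀ => ?_, fun hθ₁ => ?_⟩
  · exact hstab.eq_zero_of_isSubrep_top_ker_inf_ker hzero hθ₀
      (isSubrep_top_ker_inf_ker hcb₁ hcb₂ h₁₁.2 h₂₁.2 h₁₂.2 h₂₂.2)
  · exact hstab.swap.eq_zero_of_isSubrep_top_ker_inf_ker (by linarith) hθ₁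
      (isSubrep_top_ker_inf_ker hda₁ hda₂ h₁₁.1 h₁₂.1 h₂₁.1 h₂₂.1)

/-- Case (A) of the trichotomy lemma: if all compositions `aᵢ ∘ bⱼ` and
`bⱼ ∘ aᵢ` vanish, then `θ₀ ≥ 0` forces `b₁ = b₂ = 0` and `θ₁ ≥ 0` forces `a₁ = a₂ = 0`. -/
theorem caseA_of_theta_stable
    [FiniteDimensional ℂ V₀] [FiniteDimensional ℂ V₁]
    (θ₀ θ₁ : ℝ) (a₁ a₂ : V₀ →ₗ[ℂ] V₁) (b₁ b₂ : V₁ →ₗ[ℂ] V₀)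
    (c : V₀ →ₗ[ℂ] V₀) (d : V₁ →ₗ[ℂ] V₁)
    (hrel : SatisfiesRelations a₁ a₂ b₁ b₂ c d)
    (hne : 0 < finrank ℂ V₀ + finrank ℂ V₁)
    (hstab : IsThetaStable θ₀ θ₁ a₁ a₂ b₁ b₂ c d)
    (hzero : θ₀ * (finrank ℂ V₀ : ℝ) + θ₁ * (finrank ℂ V₁ : ℝ) = 0)
    (hcomp : ∀ a : V₀ →ₗ[ℂ] V₁, ∀ b : V₁ →ₗ[ℂ] V₀,
      (a = a₁ ∨ a = a₂) → (b = b₁ ∨ b = b₂) → a ∘ₗ b = 0 ∧ b ∘ₗ a = 0) :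
    (0 ≤ θ₀ → b₁ = 0 ∧ b₂ = 0) ∧ (0 ≤ θ₁ → a₁ = 0 ∧ a₂ = 0) :=
  caseA_of_theta_stable_general θ₀ θ₁ a₁ a₂ b₁ b₂ c d hrel hstab hzero hcomp
end

section
/- Let Θ = (θ_0, θ_1) ∈ ℝ² and let V = (V_0, V_1) be a nonzero finite-dimensional Θ-stable representation of (Q,I) with θ_0·dim V_0 + θ_1·dim V_1 = 0, and suppose that a_1 : V_0 → V_1 and b_1 : V_1 → V_0 are both bijective. Then dim V_0 = dim V_1 = 1. (Case (B) in the proof of the trichotomy lemma; the proof uses that the operators b_1 a_1, b_2 a_1, b_1 a_2, b_2 a_2, c on V_0 pairwise commute and a common eigenvector generates a subrepresentation.) -/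
/-!
Since `a₁` is an isomorphism, transporting the arrows to `V₀` gives the endomorphisms
`a₁⁻¹a₂, b₁a₁, b₂a₁, c`, and the relations make them pairwise commute. If `dim V₀ > 1` they
have a common invariant subspace `0 ≠ W ≠ V₀`, and `(W, a₁ W)` is then a subrepresentation
with `dim W = dim a₁W`, so its slope `(θ₀ + θ₁)/2` equals that of `V`, contradicting stability.
-/

open Module

variable {V₀ V₁ : Type*} [AddCommGroup V₀] [Module ℂ V₀] [AddCommGroup V₁] [Module ℂ V₁]

namespace Module.End

variable {K V : Type*} [Field K] [IsAlgClosed K] [AddCommGroup V] [Module K V]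
  [FiniteDimensional K V]

/-- If some `f i` is not scalar, one of its eigenspaces works; otherwise any line does. -/
theorem exists_invariant_ne_bot_ne_top_of_commute {ι : Type*} (f : ι → End K V)
    (hf : ∀ i j, Commute (f i) (f j)) (hV : 1 < finrank K V) :
    ∃ W : Submodule K V, W ≠ ⊥ ∧ W ≠ ⊤ ∧ ∀ i, ∀ x ∈ W, f i x ∈ W := by
  have : Nontrivial V := Module.nontrivial_of_finrank_pos (R := K) (by omega)
  by_cases hscalar : ∀ i, ∃ μ, (f i).eigenspace μ = ⊤
  · obtain ⟨v, hv⟩ := exists_ne (0 : V)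
    refine ⟨K ∙ v, by simpa using hv, fun htop => ?_, fun i x hx => ?_⟩
    · have := finrank_span_singleton (K := K) hv
      rw [htop, finrank_top] at this
      omega
    · obtain ⟨μ, hμ⟩ := hscalar i
      rw [mem_eigenspace_iff.mp (hμ ▸ Submodule.mem_top : x ∈ (f i).eigenspace μ)]
      exact Submodule.smul_mem _ μ hx
  · push Not at hscalar
    obtain ⟨i, hi⟩ := hscalar
    obtain ⟨μ, hμ⟩ := (f i).exists_eigenvalue
    exact ⟨(f i).eigenspace μ, hμ, hi μ,
      fun j x hx => mapsTo_genEigenspace_of_comm (hf i j) μ 1 hx⟩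

end Module.End

section CaseB

variable (e : V₀ ≃ₗ[ℂ] V₁) (a₂ : V₀ →ₗ[ℂ] V₁) (b₁ b₂ : V₁ →ₗ[ℂ] V₀) (c : V₀ →ₗ[ℂ] V₀)
  (d : V₁ →ₗ[ℂ] V₁)

def vertexZeroEnds : Fin 4 → Module.End ℂ V₀ :=
  ![e.symm.toLinearMap ∘ₗ a₂, b₁ ∘ₗ e.toLinearMap, b₂ ∘ₗ e.toLinearMap, c]

variable {e a₂ b₁ b₂ c d}

theorem commute_vertexZeroEnds (hrel : SatisfiesRelations e a₂ b₁ b₂ c d) (i j : Fin 4) :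
    Commute (vertexZeroEnds e a₂ b₁ b₂ c i) (vertexZeroEnds e a₂ b₁ b₂ c j) := by
  obtain ⟨h₁, h₂, h₃, -, h₅, h₆, h₇, h₈⟩ := hrel
  have hsymm : ∀ y, e.symm (d y) = c (e.symm y) := fun y => by
    simpa using congr(e.symm ($h₅ (e.symm y)))
  have hP : ∀ b : V₁ →ₗ[ℂ] V₀, e.toLinearMap ∘ₗ b ∘ₗ a₂ = a₂ ∘ₗ b ∘ₗ e.toLinearMap →
      Commute (e.symm.toLinearMap ∘ₗ a₂) (b ∘ₗ e.toLinearMap) := fun b hb => by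
    ext x; simpa using congr(e.symm ($hb x)).symm
  have hPc : Commute (e.symm.toLinearMap ∘ₗ a₂) c := by
    ext x; simpa [hsymm] using congr(e.symm ($h₆ x)).symm
  have hST : Commute (b₁ ∘ₗ e.toLinearMap) (b₂ ∘ₗ e.toLinearMap) := by
    ext x; simpa using congr($h₃ (e x)).symm
  have hc : ∀ b : V₁ →ₗ[ℂ] V₀, c ∘ₗ b = b ∘ₗ d →
      Commute (b ∘ₗ e.toLinearMap) c := fun b hb => by
    ext x
    have hdx := congr($h₅ x)
    have hbx := congr($hb (e x))
    simp only [LinearMap.comp_apply, LinearEquiv.coe_coe] at hdx hbx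
    simp [← hdx, hbx]
  have hPS := hP b₁ h₁.symm
  have hPT := hP b₂ h₂.symm
  have hSc := hc b₁ h₇
  have hTc := hc b₂ h₈
  fin_cases i <;> fin_cases j <;> simp only [vertexZeroEnds] <;>
    first | exact .refl _ | assumption | exact .symm (by assumption)

theorem isSubrep_map_of_forall_mem (hdc : d ∘ₗ e.toLinearMap = e.toLinearMap ∘ₗ c)
    {W : Submodule ℂ V₀} (hW : ∀ i, ∀ x ∈ W, vertexZeroEnds e a₂ b₁ b₂ c i x ∈ W) :
    IsSubrep e a₂ b₁ b₂ c d W (W.map e.toLinearMap) := by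
  refine ⟨fun x hx => Submodule.mem_map_of_mem hx, fun x hx => ?_, ?_, ?_, hW 3, ?_⟩
  · exact ⟨_, hW 0 x hx, by simp [vertexZeroEnds]⟩
  · rintro _ ⟨x, hx, rfl⟩
    exact hW 1 x hx
  · rintro _ ⟨x, hx, rfl⟩
    exact hW 2 x hx
  · rintro _ ⟨x, hx, rfl⟩
    exact ⟨c x, hW 3 x hx, congr($hdc x).symm⟩

end CaseB

theorem slopeMu_self (θ₀ θ₁ : ℝ) {n : ℕ} (hn : n ≠ 0) : slopeMu θ₀ θ₁ n n = (θ₀ + θ₁) / 2 := by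
  have : (n : ℝ) ≠ 0 := by exact_mod_cast hn
  rw [slopeMu]
  field_simp
  ring

theorem caseB_of_theta_stable_general
    [FiniteDimensional ℂ V₀] [FiniteDimensional ℂ V₁]
    (θ₀ θ₁ : ℝ) (a₁ a₂ : V₀ →ₗ[ℂ] V₁) (b₁ b₂ : V₁ →ₗ[ℂ] V₀)
    (c : V₀ →ₗ[ℂ] V₀) (d : V₁ →ₗ[ℂ] V₁)
    (hrel : SatisfiesRelations a₁ a₂ b₁ b₂ c d)
    (hne : 0 < finrank ℂ V₀ + finrank ℂ V₁)
    (hstab : IsThetaStable θ₀ θ₁ a₁ a₂ b₁ b₂ c d)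
    (ha₁ : Function.Bijective a₁) :
    finrank ℂ V₀ = 1 ∧ finrank ℂ V₁ = 1 := by
  obtain ⟨e, rfl⟩ : ∃ e : V₀ ≃ₗ[ℂ] V₁, e.toLinearMap = a₁ := ⟨.ofBijective a₁ ha₁, rfl⟩
  have hdim : finrank ℂ V₁ = finrank ℂ V₀ := e.symm.finrank_eq
  suffices finrank ℂ V₀ = 1 from ⟨this, hdim ▸ this⟩
  by_contra hV₀
  obtain ⟨W, hW_ne_bot, hW_ne_top, hW⟩ := Module.End.exists_invariant_ne_bot_ne_top_of_commute
    _ (commute_vertexZeroEnds hrel) (by omega)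
  have hWe : finrank ℂ (W.map e.toLinearMap) = finrank ℂ W :=
    (e.submoduleMap W).symm.finrank_eq
  have hW_pos : finrank ℂ W ≠ 0 := Submodule.finrank_eq_zero.not.mpr hW_ne_bot
  have hslope := hstab W (W.map e.toLinearMap) (isSubrep_map_of_forall_mem hrel.2.2.2.2.1 hW)
    (fun h => hW_ne_bot h.1) (fun h => hW_ne_top h.1)
  rw [hWe, hdim, slopeMu_self _ _ hW_pos, slopeMu_self _ _ (by omega)] at hslope
  exact lt_irrefl _ hslope

/-- Case (B) of the trichotomy lemma: if `a₁` and `b₁` are bijective,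
then `dim V₀ = dim V₁ = 1`. -/
theorem caseB_of_theta_stable
    [FiniteDimensional ℂ V₀] [FiniteDimensional ℂ V₁]
    (θ₀ θ₁ : ℝ) (a₁ a₂ : V₀ →ₗ[ℂ] V₁) (b₁ b₂ : V₁ →ₗ[ℂ] V₀)
    (c : V₀ →ₗ[ℂ] V₀) (d : V₁ →ₗ[ℂ] V₁)
    (hrel : SatisfiesRelations a₁ a₂ b₁ b₂ c d)
    (hne : 0 < finrank ℂ V₀ + finrank ℂ V₁)
    (hstab : IsThetaStable θ₀ θ₁ a₁ a₂ b₁ b₂ c d)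
    (hzero : θ₀ * (finrank ℂ V₀ : ℝ) + θ₁ * (finrank ℂ V₁ : ℝ) = 0)
    (ha₁ : Function.Bijective a₁) (hb₁ : Function.Bijective b₁) :
    finrank ℂ V₀ = 1 ∧ finrank ℂ V₁ = 1 :=
  caseB_of_theta_stable_general θ₀ θ₁ a₁ a₂ b₁ b₂ c d hrel hne hstab ha₁
end

section
/- (Classification in chamber IV.) Suppose θ_0 > 0, θ_1 < 0 and θ_0 + 2θ_1 < 0. Let Ṽ = (V_0, V_1, ℂ) be a framed representation of (Q̃,I) such that ι : ℂ → V_0 is an isomorphism and dim V_1 ≠ 1. Then Ṽ is Θ-stable if and only if dim V_1 = 2 and the map (a_1, a_2) : V_0 ⊕ V_0 → V_1 is bijective. Moreover, in this case the relations of (Q,I) force b_1 = b_2 = 0. -/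
open Module

variable {V₀ V₁ : Type*} [AddCommGroup V₀] [Module ℂ V₀] [AddCommGroup V₁] [Module ℂ V₁]

/-- `Θ`-stability for a framed representation `(V₀, V₁, V_∞ = ℂ)` of `(Q̃, I)` with framing
map `ι : ℂ → V₀`:
(i) every framed subrepresentation `(W₀, W₁, 0)` with `(W₀, W₁) ≠ (0, 0)` satisfies
`Θ(W₀, W₁) < 0`, and
(ii) every framed subrepresentation `(W₀, W₁, ℂ)` with `(W₀, W₁) ≠ (V₀, V₁)` satisfies
`Θ(W₀, W₁) < Θ(V₀, V₁)`. -/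
def IsFramedStable [FiniteDimensional ℂ V₀] [FiniteDimensional ℂ V₁]
    (θ₀ θ₁ : ℝ) (a₁ a₂ : V₀ →ₗ[ℂ] V₁) (b₁ b₂ : V₁ →ₗ[ℂ] V₀)
    (c : V₀ →ₗ[ℂ] V₀) (d : V₁ →ₗ[ℂ] V₁) (ι : ℂ →ₗ[ℂ] V₀) : Prop :=
  (∀ W₀ : Submodule ℂ V₀, ∀ W₁ : Submodule ℂ V₁,
      IsSubrep a₁ a₂ b₁ b₂ c d W₀ W₁ → ¬(W₀ = ⊥ ∧ W₁ = ⊥) →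
      θ₀ * (finrank ℂ W₀ : ℝ) + θ₁ * (finrank ℂ W₁ : ℝ) < 0) ∧
    (∀ W₀ : Submodule ℂ V₀, ∀ W₁ : Submodule ℂ V₁,
      IsSubrep a₁ a₂ b₁ b₂ c d W₀ W₁ → LinearMap.range ι ≤ W₀ →
      ¬(W₀ = ⊤ ∧ W₁ = ⊤) →
      θ₀ * (finrank ℂ W₀ : ℝ) + θ₁ * (finrank ℂ W₁ : ℝ) <
        θ₀ * (finrank ℂ V₀ : ℝ) + θ₁ * (finrank ℂ V₁ : ℝ))

/-! Since `ι` is an isomorphism, `V₀` is a line. For the framed subrepresentation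
`(V₀, a₁ V₀ + a₂ V₀, ℂ)` condition (ii) and `θ₁ < 0` force `a₁ V₀ + a₂ V₀ = V₁`, so
`dim V₁ ≤ 2`; condition (i) for the whole representation and `θ₀ > 0` exclude `V₁ = 0`.
Conversely, when `(a₁, a₂)` is onto, the only subrepresentations are `(0, W₁)`, with
`Θ = θ₁ dim W₁`, and `(V₀, V₁)`, with `Θ = θ₀ + 2θ₁`. Finally each `b a_i` is a scalar on the
line `V₀`, and the relation `a₂ b a₁ = a₁ b a₂` becomes `s₁ a₂ = s₂ a₁`, which injectivity of
`(a₁, a₂)` allows only for `s₁ = s₂ = 0`. -/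

section OneDimensional

variable {K E F : Type*} [Field K] [AddCommGroup E] [Module K E] [AddCommGroup F] [Module K F]

theorem LinearMap.eq_zero_and_eq_zero_of_smul_eq_smul_of_injective_coprod [Nontrivial E] {f g : E →ₗ[K] F}
    (hfg : Function.Injective (f.coprod g)) {s t : K} (h : s • g = t • f) : s = 0 ∧ t = 0 := by
  obtain ⟨x, hx⟩ := exists_ne (0 : E)
  have hker : f.coprod g (t • x, -(s • x)) = 0 := by
    have hx' := LinearMap.congr_fun h x
    simp only [LinearMap.smul_apply] at hx'
    simp [hx']
  have hzero := (injective_iff_map_eq_zero _).1 hfg _ hker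
  simp only [Prod.mk_eq_zero, neg_eq_zero, smul_eq_zero] at hzero
  exact ⟨hzero.2.resolve_right hx, hzero.1.resolve_right hx⟩

theorem LinearMap.eq_zero_of_comp_comp_eq_of_bijective_coprod (hE : finrank K E = 1)
    {a₁ a₂ : E →ₗ[K] F} (hbij : Function.Bijective (a₁.coprod a₂)) {b : F →ₗ[K] E}
    (h : a₂ ∘ₗ b ∘ₗ a₁ = a₁ ∘ₗ b ∘ₗ a₂) : b = 0 := by
  have : Nontrivial E := Module.nontrivial_of_finrank_eq_succ hE
  obtain ⟨s, hs, -⟩ := (b ∘ₗ a₁).existsUnique_eq_smul_id_of_finrank_eq_one hE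
  obtain ⟨t, ht, -⟩ := (b ∘ₗ a₂).existsUnique_eq_smul_id_of_finrank_eq_one hE
  have hscalars : s • a₂ = t • a₁ := by
    rwa [hs, ht, LinearMap.comp_smul, LinearMap.comp_smul, LinearMap.comp_id,
      LinearMap.comp_id] at h
  obtain ⟨rfl, rfl⟩ := eq_zero_and_eq_zero_of_smul_eq_smul_of_injective_coprod hbij.1 hscalars
  rw [zero_smul] at hs ht
  rw [← LinearMap.cancel_right hbij.2, LinearMap.comp_coprod, hs, ht, LinearMap.coprod_zero_left,
    LinearMap.zero_comp, LinearMap.zero_comp]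

end OneDimensional

section FramedStability

variable {a₁ a₂ : V₀ →ₗ[ℂ] V₁} {b₁ b₂ : V₁ →ₗ[ℂ] V₀} {c : V₀ →ₗ[ℂ] V₀} {d : V₁ →ₗ[ℂ] V₁}

theorem isSubrep_top_top : IsSubrep a₁ a₂ b₁ b₂ c d ⊤ ⊤ :=
  ⟨fun _ _ => trivial, fun _ _ => trivial, fun _ _ => trivial, fun _ _ => trivial,
    fun _ _ => trivial, fun _ _ => trivial⟩

theorem isSubrep_top_range_coprod (h₁ : d ∘ₗ a₁ = a₁ ∘ₗ c) (h₂ : d ∘ₗ a₂ = a₂ ∘ₗ c) :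
    IsSubrep a₁ a₂ b₁ b₂ c d ⊤ (LinearMap.range (a₁.coprod a₂)) := by
  refine ⟨fun x _ => ⟨(x, 0), by simp⟩, fun x _ => ⟨(0, x), by simp⟩, fun _ _ => trivial,
    fun _ _ => trivial, fun _ _ => trivial, ?_⟩
  rintro _ ⟨⟨u, v⟩, rfl⟩
  have e₁ := LinearMap.congr_fun h₁ u
  have e₂ := LinearMap.congr_fun h₂ v
  simp only [LinearMap.comp_apply] at e₁ e₂
  exact ⟨(c u, c v), by simp [e₁, e₂]⟩

theorem IsSubrep.eq_top_of_surjective_coprod {W₁ : Submodule ℂ V₁}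
    (hW : IsSubrep a₁ a₂ b₁ b₂ c d ⊤ W₁) (hsurj : Function.Surjective (a₁.coprod a₂)) :
    W₁ = ⊤ := by
  refine Submodule.eq_top_iff'.2 fun y => ?_
  obtain ⟨⟨u, v⟩, rfl⟩ := hsurj y
  exact add_mem (hW.1 u trivial) (hW.2.1 v trivial)

variable [FiniteDimensional ℂ V₀] [FiniteDimensional ℂ V₁] {θ₀ θ₁ : ℝ} {ι : ℂ →ₗ[ℂ] V₀}

theorem IsFramedStable.surjective_coprod (hθ₁ : θ₁ < 0) (h₁ : d ∘ₗ a₁ = a₁ ∘ₗ c)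
    (h₂ : d ∘ₗ a₂ = a₂ ∘ₗ c) (hst : IsFramedStable θ₀ θ₁ a₁ a₂ b₁ b₂ c d ι) :
    Function.Surjective (a₁.coprod a₂) := by
  rw [← LinearMap.range_eq_top]
  by_contra hne
  have hlt := hst.2 ⊤ _ (isSubrep_top_range_coprod h₁ h₂) le_top (fun h => hne h.2)
  have hle : (finrank ℂ (LinearMap.range (a₁.coprod a₂)) : ℝ) ≤ finrank ℂ V₁ := by
    exact_mod_cast Submodule.finrank_le _
  rw [finrank_top] at hlt
  nlinarith

theorem IsFramedStable.finrank_ne_zero (hθ₀ : 0 < θ₀) (hV₀ : finrank ℂ V₀ = 1)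
    (hst : IsFramedStable θ₀ θ₁ a₁ a₂ b₁ b₂ c d ι) : finrank ℂ V₁ ≠ 0 := by
  have : Nontrivial V₀ := Module.nontrivial_of_finrank_eq_succ hV₀
  intro hV₁
  have hlt := hst.1 ⊤ ⊤ isSubrep_top_top (fun h => top_ne_bot h.1)
  rw [finrank_top, finrank_top, hV₀, hV₁] at hlt
  norm_num at hlt
  linarith

theorem IsFramedStable.finrank_eq_two_and_bijective_coprod (hθ₀ : 0 < θ₀) (hθ₁ : θ₁ < 0)
    (h₁ : d ∘ₗ a₁ = a₁ ∘ₗ c) (h₂ : d ∘ₗ a₂ = a₂ ∘ₗ c) (hV₀ : finrank ℂ V₀ = 1)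
    (hV₁ : finrank ℂ V₁ ≠ 1) (hst : IsFramedStable θ₀ θ₁ a₁ a₂ b₁ b₂ c d ι) :
    finrank ℂ V₁ = 2 ∧ Function.Bijective (a₁.coprod a₂) := by
  have hsurj := hst.surjective_coprod hθ₁ h₁ h₂
  have hprod : finrank ℂ (V₀ × V₀) = 2 := by rw [Module.finrank_prod, hV₀]
  have hle : finrank ℂ V₁ ≤ 2 := hprod ▸ LinearMap.finrank_le_finrank_of_surjective hsurj
  have hV₁_two : finrank ℂ V₁ = 2 := by have := hst.finrank_ne_zero hθ₀ hV₀; omega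
  refine ⟨hV₁_two, ?_, hsurj⟩
  exact (LinearMap.injective_iff_surjective_of_finrank_eq_finrank (hprod.trans hV₁_two.symm)).2
    hsurj

theorem isFramedStable_of_surjective_coprod (hθ₁ : θ₁ < 0) (hθ : θ₀ + 2 * θ₁ < 0)
    (hV₀ : finrank ℂ V₀ = 1) (hV₁ : finrank ℂ V₁ = 2) (hι : Function.Surjective ι)
    (hsurj : Function.Surjective (a₁.coprod a₂)) :
    IsFramedStable θ₀ θ₁ a₁ a₂ b₁ b₂ c d ι := by
  have : IsSimpleModule ℂ V₀ := isSimpleModule_iff_finrank_eq_one.2 hV₀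
  refine ⟨fun W₀ W₁ hW hne => ?_, fun W₀ W₁ hW hιW hne => ?_⟩
  · rcases eq_bot_or_eq_top W₀ with rfl | rfl
    · have hpos : (1 : ℝ) ≤ finrank ℂ W₁ := by
        exact_mod_cast Nat.one_le_iff_ne_zero.2
          fun h => hne ⟨rfl, Submodule.finrank_eq_zero.1 h⟩
      rw [finrank_bot]
      push_cast
      nlinarith
    · rw [hW.eq_top_of_surjective_coprod hsurj, finrank_top, finrank_top, hV₀, hV₁]
      push_cast
      linarith
  · obtain rfl : W₀ = ⊤ := top_le_iff.1 (LinearMap.range_eq_top.2 hι ▸ hιW)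
    exact (hne ⟨rfl, hW.eq_top_of_surjective_coprod hsurj⟩).elim

end FramedStability

/-- Classification in chamber IV: if `θ₀ > 0`, `θ₁ < 0`, `θ₀ + 2θ₁ < 0`,
`ι : ℂ → V₀` is an isomorphism and `dim V₁ ≠ 1`, then the framed representation is
`Θ`-stable iff `dim V₁ = 2` and `(a₁, a₂) : V₀ ⊕ V₀ → V₁` is bijective; moreover, in
this case the relations of `(Q, I)` force `b₁ = b₂ = 0`. -/
theorem classification_chamber_IV
    [FiniteDimensional ℂ V₀] [FiniteDimensional ℂ V₁]
    (θ₀ θ₁ : ℝ) (hθ₀ : 0 < θ₀) (hθ₁ : θ₁ < 0) (hc : θ₀ + 2 * θ₁ < 0)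
    (a₁ a₂ : V₀ →ₗ[ℂ] V₁) (b₁ b₂ : V₁ →ₗ[ℂ] V₀)
    (c : V₀ →ₗ[ℂ] V₀) (d : V₁ →ₗ[ℂ] V₁) (ι : ℂ →ₗ[ℂ] V₀)
    (hrel : SatisfiesRelations a₁ a₂ b₁ b₂ c d)
    (hι : Function.Bijective ι)
    (hd1 : finrank ℂ V₁ ≠ 1) :
    (IsFramedStable θ₀ θ₁ a₁ a₂ b₁ b₂ c d ι ↔
      (finrank ℂ V₁ = 2 ∧ Function.Bijective ⇑(LinearMap.coprod a₁ a₂))) ∧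
    (IsFramedStable θ₀ θ₁ a₁ a₂ b₁ b₂ c d ι → b₁ = 0 ∧ b₂ = 0) := by
  have hV₀ : finrank ℂ V₀ = 1 :=
    (LinearEquiv.ofBijective ι hι).finrank_eq.symm.trans (finrank_self ℂ)
  have hforward := fun hst : IsFramedStable θ₀ θ₁ a₁ a₂ b₁ b₂ c d ι =>
    hst.finrank_eq_two_and_bijective_coprod hθ₀ hθ₁ hrel.2.2.2.2.1 hrel.2.2.2.2.2.1 hV₀ hd1
  refine ⟨⟨hforward, fun ⟨hV₁, hbij⟩ =>
    isFramedStable_of_surjective_coprod hθ₁ hc hV₀ hV₁ hι.2 hbij.2⟩, fun hst => ?_⟩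
  obtain ⟨-, hbij⟩ := hforward hst
  exact ⟨LinearMap.eq_zero_of_comp_comp_eq_of_bijective_coprod hV₀ hbij hrel.1,
    LinearMap.eq_zero_of_comp_comp_eq_of_bijective_coprod hV₀ hbij hrel.2.1⟩
end
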